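/- arXiv:2404.02070 — 2 statements merged into one kernel-verified Lean document; each statement's English description precedes it below -/
import Mathlib

section
/- Let M and N be positive definite symmetric matrices. Then ‖√M - √N‖_op ≤ ‖(√M + √N)⁻¹‖_op · ‖M - N‖_op, where √· denotes the positive definite matrix square root and ‖·‖_op the operator norm. -/
/-! Write `D = √M - √N` and `S = √M + √N`. Since `M - N = √M D + D √N` and `D` is symmetric, an
eigenvector `x` of `D` for an eigenvalue `λ` with `|λ| = ‖D‖` satisfies
`⟪x, (M - N) x⟫ = λ ⟪x, S x⟫`. Coercivity of `S` gives `‖x‖² ≤ ‖S⁻¹‖ ⟪x, S x⟫`, because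
`‖x‖² = ⟪√S x, S⁻¹ √S x⟫ ≤ ‖S⁻¹‖ ‖√S x‖²`. Together,
`‖D‖ ‖x‖² ≤ ‖S⁻¹‖ |⟪x, (M - N) x⟫| ≤ ‖S⁻¹‖ ‖M - N‖ ‖x‖²`. -/

open Matrix

-- The old Mathlib `Matrix.PosSemidef.sqrt` (removed since), restated with its original definition.
open scoped ComplexOrder in
noncomputable def Matrix.PosSemidef.sqrt {n 𝕜 : Type*} [Fintype n] [RCLike 𝕜] [DecidableEq n]
    {A : Matrix n n 𝕜} (hA : A.PosSemidef) : Matrix n n 𝕜 :=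
  (hA.1.eigenvectorUnitary : Matrix n n 𝕜) * diagonal (((↑) : ℝ → 𝕜) ∘ Real.sqrt ∘ hA.1.eigenvalues) *
    (star hA.1.eigenvectorUnitary : Matrix n n 𝕜)

noncomputable def opNorm {n : ℕ} (A : Matrix (Fin n) (Fin n) ℝ) : ℝ :=
  ‖Matrix.toEuclideanCLM (𝕜 := ℝ) A‖

open scoped ComplexOrder RealInnerProductSpace

namespace Matrix

variable {n 𝕜 : Type*} [Fintype n] [RCLike 𝕜] [DecidableEq n]

lemma PosSemidef.posSemidef_sqrt {A : Matrix n n 𝕜} (hA : A.PosSemidef) : hA.sqrt.PosSemidef := by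
  have h := (PosSemidef.diagonal (d := ((↑) : ℝ → 𝕜) ∘ Real.sqrt ∘ hA.1.eigenvalues)
    fun i => RCLike.ofReal_nonneg.mpr (Real.sqrt_nonneg _)).mul_mul_conjTranspose_same
      (hA.1.eigenvectorUnitary : Matrix n n 𝕜)
  rwa [← star_eq_conjTranspose] at h

lemma PosSemidef.sqrt_mul_self {A : Matrix n n 𝕜} (hA : A.PosSemidef) : hA.sqrt * hA.sqrt = A := by
  set U : Matrix n n 𝕜 := (hA.1.eigenvectorUnitary : Matrix n n 𝕜)
  have hU : star U * U = 1 := Unitary.coe_star_mul_self _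
  conv_rhs => rw [hA.1.spectral_theorem, Unitary.conjStarAlgAut_apply]
  calc hA.sqrt * hA.sqrt
      = U * (diagonal (((↑) : ℝ → 𝕜) ∘ Real.sqrt ∘ hA.1.eigenvalues) * (star U * U) *
          diagonal (((↑) : ℝ → 𝕜) ∘ Real.sqrt ∘ hA.1.eigenvalues)) * star U := by
        simp only [sqrt, U, Matrix.mul_assoc]
    _ = _ := by
        rw [hU, Matrix.mul_one, diagonal_mul_diagonal]
        congr 3 with i
        simp only [Function.comp_apply, ← RCLike.ofReal_mul,
          Real.mul_self_sqrt (hA.eigenvalues_nonneg i)]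

lemma PosDef.posDef_sqrt {A : Matrix n n 𝕜} (hA : A.PosDef) : hA.posSemidef.sqrt.PosDef :=
  hA.posSemidef.posSemidef_sqrt.posDef_iff_isUnit.mpr <|
    isUnit_of_mul_isUnit_left (hA.posSemidef.sqrt_mul_self ▸ hA.isUnit)

end Matrix

theorem LinearMap.IsSymmetric.exists_hasEigenvalue_norm_eq {𝕜 E : Type*} [RCLike 𝕜]
    [NormedAddCommGroup E] [InnerProductSpace 𝕜 E] [FiniteDimensional 𝕜 E] [Nontrivial E]
    {T : E →L[𝕜] E} (hT : (T : E →ₗ[𝕜] E).IsSymmetric) :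
    ∃ μ : 𝕜, Module.End.HasEigenvalue (T : E →ₗ[𝕜] E) μ ∧ ‖μ‖ = ‖T‖ := by
  have := FiniteDimensional.complete 𝕜 E
  simp_rw [Module.End.hasEigenvalue_iff_mem_spectrum, ← ContinuousLinearMap.spectrum_eq]
  have hne : (spectrum 𝕜 T).Nonempty := ⟨_, by
    rw [ContinuousLinearMap.spectrum_eq, ← Module.End.hasEigenvalue_iff_mem_spectrum]
    exact hT.hasEigenvalue_iSup_of_finiteDimensional⟩
  obtain ⟨μ, hμ, hμT⟩ := spectrum.exists_nnnorm_eq_spectralRadius_of_nonempty hne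
  rw [T.spectralRadius_eq_nnnorm (ContinuousLinearMap.isSelfAdjoint_iff_isSymmetric.mpr hT)] at hμT
  exact ⟨μ, hμ, congrArg NNReal.toReal (ENNReal.coe_injective hμT)⟩

namespace ContinuousLinearMap

variable {E : Type*} [NormedAddCommGroup E] [InnerProductSpace ℝ E]

theorem inner_apply_mul_self_sub_mul_self {A B : E →L[ℝ] E}
    (hAB : ((A - B : E →L[ℝ] E) : E →ₗ[ℝ] E).IsSymmetric) {μ : ℝ} {x : E}
    (hx : (A - B) x = μ • x) : ⟪x, (A * A - B * B) x⟫ = μ * ⟪x, (A + B) x⟫ := by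
  have hsplit : A * A - B * B = A * (A - B) + (A - B) * B := by noncomm_ring
  have hdiff : ⟪x, (A - B) (B x)⟫ = μ * ⟪x, B x⟫ := by
    rw [← show ⟪(A - B) x, B x⟫ = ⟪x, (A - B) (B x)⟫ from hAB x (B x), hx, real_inner_smul_left]
  rw [hsplit, _root_.add_apply, mul_apply_eq_comp, mul_apply_eq_comp, inner_add_right, hx,
    map_smul, real_inner_smul_right, hdiff, _root_.add_apply, inner_add_right, mul_add]

theorem norm_sq_le_norm_mul_inner_mul_self {R T : E →L[ℝ] E} (hR : (R : E →ₗ[ℝ] E).IsSymmetric)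
    (hRTR : R * T * R = 1) (x : E) : ‖x‖ ^ 2 ≤ ‖T‖ * ⟪x, (R * R) x⟫ := by
  have hRsymm (u v : E) : ⟪R u, v⟫ = ⟪u, R v⟫ := hR u v
  have hRx : ⟪x, (R * R) x⟫ = ‖R x‖ ^ 2 := by
    rw [mul_apply_eq_comp, ← hRsymm, real_inner_self_eq_norm_sq]
  calc ‖x‖ ^ 2 = ⟪R x, T (R x)⟫ := by
        rw [← real_inner_self_eq_norm_sq, hRsymm, ← mul_apply_eq_comp, ← mul_apply_eq_comp,
          hRTR, one_apply_eq_self]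
    _ ≤ ‖R x‖ * ‖T (R x)‖ := real_inner_le_norm _ _
    _ ≤ ‖R x‖ * (‖T‖ * ‖R x‖) := by gcongr; exact T.le_opNorm _
    _ = ‖T‖ * ⟪x, (R * R) x⟫ := by rw [hRx]; ring

variable [FiniteDimensional ℝ E]

theorem norm_sub_le_mul_norm_mul_self_sub {A B : E →L[ℝ] E}
    (hAB : ((A - B : E →L[ℝ] E) : E →ₗ[ℝ] E).IsSymmetric) {C : ℝ} (hC : 0 ≤ C)
    (hcoer : ∀ x, ‖x‖ ^ 2 ≤ C * ⟪x, (A + B) x⟫) :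
    ‖A - B‖ ≤ C * ‖A * A - B * B‖ := by
  rcases subsingleton_or_nontrivial E with hE | hE
  · simp [Subsingleton.elim (A - B) 0, Subsingleton.elim (A * A - B * B) 0]
  obtain ⟨μ, hμ, hμAB⟩ := hAB.exists_hasEigenvalue_norm_eq
  obtain ⟨x, hx⟩ := hμ.exists_hasEigenvector
  have hx0 : 0 < ‖x‖ ^ 2 := pow_pos (norm_pos_iff.mpr hx.2) 2
  have hkey := inner_apply_mul_self_sub_mul_self hAB hx.apply_eq_smul
  set s := ⟪x, (A + B) x⟫
  refine le_of_mul_le_mul_right ?_ hx0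
  calc ‖A - B‖ * ‖x‖ ^ 2 = |μ| * ‖x‖ ^ 2 := by rw [← hμAB, Real.norm_eq_abs]
    _ ≤ |μ| * (C * s) := by gcongr; exact hcoer x
    _ ≤ C * |μ * s| := by
        rw [abs_mul, mul_left_comm]; gcongr; exact le_abs_self s
    _ ≤ C * (‖x‖ * ‖(A * A - B * B) x‖) := by
        gcongr; rw [← hkey]; exact abs_real_inner_le_norm _ _
    _ ≤ C * ‖A * A - B * B‖ * ‖x‖ ^ 2 := by
        grw [le_opNorm]; apply le_of_eq; ring

end ContinuousLinearMap

theorem Matrix.PosDef.norm_sq_le_norm_inv_mul_inner {ι : Type*} [Fintype ι] [DecidableEq ι]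
    {S : Matrix ι ι ℝ} (hS : S.PosDef) (x : EuclideanSpace ℝ ι) :
    ‖x‖ ^ 2 ≤ ‖toEuclideanCLM (𝕜 := ℝ) S⁻¹‖ * ⟪x, toEuclideanCLM (𝕜 := ℝ) S x⟫ := by
  let φ := toEuclideanCLM (𝕜 := ℝ) (n := ι)
  set R := hS.posSemidef.sqrt
  have hRR : R * R = S := hS.posSemidef.sqrt_mul_self
  have hR : IsUnit R.det := (isUnit_iff_isUnit_det R).mp hS.posDef_sqrt.isUnit
  have hRSR : R * S⁻¹ * R = 1 := by
    rw [← hRR, Matrix.mul_inv_rev, ← Matrix.mul_assoc, mul_nonsing_inv _ hR, Matrix.one_mul,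
      nonsing_inv_mul _ hR]
  have := ContinuousLinearMap.norm_sq_le_norm_mul_inner_mul_self
    (hS.posDef_sqrt.1.isSelfAdjoint.map φ).isSymmetric
    (by rw [← map_mul φ, ← map_mul φ, hRSR, map_one]) x
  rwa [← map_mul φ, hRR] at this

theorem stmt8 {n : ℕ} (M N : Matrix (Fin n) (Fin n) ℝ) (hM : M.PosDef) (hN : N.PosDef) :
    opNorm (hM.posSemidef.sqrt - hN.posSemidef.sqrt)
      ≤ opNorm ((hM.posSemidef.sqrt + hN.posSemidef.sqrt)⁻¹) * opNorm (M - N) := by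
  set A := hM.posSemidef.sqrt
  set B := hN.posSemidef.sqrt
  have hS : (A + B).PosDef := hM.posDef_sqrt.add hN.posDef_sqrt
  have hAB : IsSelfAdjoint (toEuclideanCLM (𝕜 := ℝ) A - toEuclideanCLM (𝕜 := ℝ) B) := by
    rw [← map_sub]
    exact (hM.posDef_sqrt.1.sub hN.posDef_sqrt.1).isSelfAdjoint.map toEuclideanCLM
  have := ContinuousLinearMap.norm_sub_le_mul_norm_mul_self_sub hAB.isSymmetric
    (norm_nonneg _) (by simpa only [map_add] using hS.norm_sq_le_norm_inv_mul_inner)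
  rwa [← map_sub, ← map_mul, ← map_mul, ← map_sub, hM.posSemidef.sqrt_mul_self,
    hN.posSemidef.sqrt_mul_self] at this
end

section
/- For any two matrices W, W̃ ∈ ℝ^{p×M}, the positive semidefinite square roots of the Gram matrices satisfy ‖(W̃ᵀW̃)^{1/2} - (WᵀW)^{1/2}‖_F ≤ √2 · ‖W - W̃‖_F, where ‖·‖_F is the Frobenius norm. -/
open Matrix

noncomputable def frobNorm {p M : ℕ} (A : Matrix (Fin p) (Fin M) ℝ) : ℝ :=
  Real.sqrt (∑ i, ∑ j, (A i j)^2)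

noncomputable def posSemidefSqrt {n : Type*} [Fintype n] [DecidableEq n]
    {A : Matrix n n ℝ} (hA : A.PosSemidef) : Matrix n n ℝ :=
  (hA.1.eigenvectorUnitary : Matrix n n ℝ) * diagonal ((↑) ∘ (√·) ∘ hA.1.eigenvalues) *
    (star hA.1.eigenvectorUnitary : Matrix n n ℝ)

/-!
The Hermitian dilation `X ↦ [[0, Xᴴ], [X, 0]]` has absolute value
`diag((XᴴX)^{1/2}, (XXᴴ)^{1/2})` and Frobenius norm `√2 ‖X‖`, so the inequality follows once
`A ↦ |A|` is 1-Lipschitz for the Frobenius norm on Hermitian matrices. More generally `A ↦ f(A)`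
is `K`-Lipschitz when `f` is: after conjugating by the eigenvector unitaries `U` of `A` and `V`
of `B`, which preserves the Frobenius norm, the entries of `f(A) - f(B)` and `A - B` are
`(f(λᵢ) - f(μⱼ)) Cᵢⱼ` and `(λᵢ - μⱼ) Cᵢⱼ` with `C = UᴴV`.
-/

open scoped Matrix.Norms.Frobenius MatrixOrder ComplexOrder NNReal

namespace Matrix

variable {𝕜 : Type*} [RCLike 𝕜] {l m n o : Type*}

section Frobenius

variable [Fintype l] [Fintype m] [Fintype n] [Fintype o]

theorem frobenius_norm_sq (A : Matrix m n 𝕜) : ‖A‖ ^ 2 = ∑ i, ∑ j, ‖A i j‖ ^ 2 := by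
  rw [frobenius_norm_def, ← Real.rpow_natCast, ← Real.rpow_mul (by positivity)]
  norm_num

theorem frobenius_norm_sq_eq_re_trace (A : Matrix m n 𝕜) :
    ‖A‖ ^ 2 = RCLike.re (Aᴴ * A).trace := by
  simp only [frobenius_norm_sq, trace, diag, mul_apply, conjTranspose_apply, map_sum,
    RCLike.star_def, RCLike.conj_mul]
  rw [Finset.sum_comm]
  norm_cast

theorem frobenius_norm_le_mul_of_forall_norm_le {A B : Matrix m n 𝕜} {K : ℝ} (hK : 0 ≤ K)
    (h : ∀ i j, ‖A i j‖ ≤ K * ‖B i j‖) : ‖A‖ ≤ K * ‖B‖ := by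
  refine le_of_sq_le_sq ?_ (by positivity)
  rw [mul_pow, frobenius_norm_sq, frobenius_norm_sq, Finset.mul_sum]
  gcongr with i _
  rw [Finset.mul_sum]
  gcongr with j _
  rw [← mul_pow]
  exact pow_le_pow_left₀ (norm_nonneg _) (h i j) 2

theorem frobenius_norm_unitary_mul [DecidableEq n] {U : Matrix n n 𝕜}
    (hU : U ∈ unitaryGroup n 𝕜) (A : Matrix n m 𝕜) : ‖U * A‖ = ‖A‖ := by
  refine (pow_left_inj₀ (norm_nonneg _) (norm_nonneg _) two_ne_zero).mp ?_
  rw [frobenius_norm_sq_eq_re_trace, frobenius_norm_sq_eq_re_trace, conjTranspose_mul,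
    Matrix.mul_assoc, ← Matrix.mul_assoc Uᴴ, ← star_eq_conjTranspose,
    mem_unitaryGroup_iff'.mp hU, Matrix.one_mul]

theorem frobenius_norm_mul_unitary [DecidableEq n] {U : Matrix n n 𝕜}
    (hU : U ∈ unitaryGroup n 𝕜) (A : Matrix m n 𝕜) : ‖A * U‖ = ‖A‖ := by
  rw [← frobenius_norm_conjTranspose, conjTranspose_mul, ← star_eq_conjTranspose U,
    frobenius_norm_unitary_mul (Unitary.star_mem hU), frobenius_norm_conjTranspose]

theorem frobenius_norm_fromBlocks_sq (A : Matrix n l 𝕜) (B : Matrix n m 𝕜)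
    (C : Matrix o l 𝕜) (D : Matrix o m 𝕜) :
    ‖fromBlocks A B C D‖ ^ 2 = ‖A‖ ^ 2 + ‖B‖ ^ 2 + ‖C‖ ^ 2 + ‖D‖ ^ 2 := by
  simp only [frobenius_norm_sq, Fintype.sum_sum_type, fromBlocks_apply₁₁, fromBlocks_apply₁₂,
    fromBlocks_apply₂₁, fromBlocks_apply₂₂, Finset.sum_add_distrib]
  ring

theorem frobenius_norm_le_norm_fromBlocks (A : Matrix n l 𝕜) (B : Matrix n m 𝕜)
    (C : Matrix o l 𝕜) (D : Matrix o m 𝕜) : ‖A‖ ≤ ‖fromBlocks A B C D‖ := by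
  refine le_of_sq_le_sq ?_ (norm_nonneg _)
  rw [frobenius_norm_fromBlocks_sq]
  nlinarith [sq_nonneg ‖B‖, sq_nonneg ‖C‖, sq_nonneg ‖D‖]

end Frobenius

namespace IsHermitian

variable [Fintype n] [DecidableEq n] {S T : Matrix n n 𝕜}

theorem frobenius_norm_cfc_sub_cfc (hS : S.IsHermitian) (hT : T.IsHermitian) (g : ℝ → ℝ) :
    ‖hS.cfc g - hT.cfc g‖ =
      ‖of fun i j => ((g (hS.eigenvalues i) - g (hT.eigenvalues j) : ℝ) : 𝕜) *
        (star (hS.eigenvectorUnitary : Matrix n n 𝕜) * hT.eigenvectorUnitary) i j‖ := by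
  set U : Matrix n n 𝕜 := (hS.eigenvectorUnitary : Matrix n n 𝕜)
  set V : Matrix n n 𝕜 := (hT.eigenvectorUnitary : Matrix n n 𝕜)
  have hconj : star U * (hS.cfc g - hT.cfc g) * V =
      diagonal (RCLike.ofReal ∘ g ∘ hS.eigenvalues) * (star U * V) -
        (star U * V) * diagonal (RCLike.ofReal ∘ g ∘ hT.eigenvalues) := by
    simp only [IsHermitian.cfc, Unitary.conjStarAlgAut_apply, Matrix.mul_sub, Matrix.sub_mul,
      Matrix.mul_assoc]
    rw [← Matrix.mul_assoc (star U) U, mem_unitaryGroup_iff'.mp hS.eigenvectorUnitary.2,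
      mem_unitaryGroup_iff'.mp hT.eigenvectorUnitary.2, Matrix.one_mul, Matrix.mul_one]
  rw [← frobenius_norm_unitary_mul (Unitary.star_mem hS.eigenvectorUnitary.2),
    ← frobenius_norm_mul_unitary hT.eigenvectorUnitary.2, hconj]
  congr 1
  ext i j
  simp only [sub_apply, diagonal_mul, Function.comp_apply, mul_diagonal, map_sub, of_apply]
  ring

theorem frobenius_norm_cfc_sub_cfc_le (hS : S.IsHermitian) (hT : T.IsHermitian) {f : ℝ → ℝ}
    {K : ℝ≥0} (hf : LipschitzWith K f) : ‖cfc f S - cfc f T‖ ≤ K * ‖S - T‖ := by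
  conv_rhs => rw [← cfc_id ℝ S, ← cfc_id ℝ T]
  rw [hS.cfc_eq, hS.cfc_eq, hT.cfc_eq, hT.cfc_eq, frobenius_norm_cfc_sub_cfc,
    frobenius_norm_cfc_sub_cfc]
  refine frobenius_norm_le_mul_of_forall_norm_le K.2 fun i j => ?_
  simp only [of_apply, norm_mul, RCLike.norm_ofReal, ← mul_assoc]
  gcongr
  simpa [Real.dist_eq] using hf.dist_le_mul (hS.eigenvalues i) (hT.eigenvalues j)

theorem frobenius_norm_cfcAbs_sub_le (hS : S.IsHermitian) (hT : T.IsHermitian) :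
    ‖CFC.abs S - CFC.abs T‖ ≤ ‖S - T‖ := by
  rw [CFC.abs_eq_cfc_norm S hS.isSelfAdjoint, CFC.abs_eq_cfc_norm T hT.isSelfAdjoint]
  simpa only [NNReal.coe_one, one_mul] using
    hS.frobenius_norm_cfc_sub_cfc_le hT lipschitzWith_one_norm

end IsHermitian

theorem fromBlocks_sub {α : Type*} [Sub α] (A A' : Matrix n l α) (B B' : Matrix n m α)
    (C C' : Matrix o l α) (D D' : Matrix o m α) :
    fromBlocks A B C D - fromBlocks A' B' C' D' =
      fromBlocks (A - A') (B - B') (C - C') (D - D') := by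
  ext (i | i) (j | j) <;> rfl

theorem PosSemidef.fromBlocks_zero [Fintype m] [Fintype n]
    {A : Matrix n n 𝕜} {B : Matrix m m 𝕜} (hA : A.PosSemidef) (hB : B.PosSemidef) :
    (fromBlocks A 0 0 B).PosSemidef := by
  classical
  obtain ⟨X, rfl⟩ := CStarAlgebra.nonneg_iff_eq_star_mul_self.mp hA.nonneg
  obtain ⟨Y, rfl⟩ := CStarAlgebra.nonneg_iff_eq_star_mul_self.mp hB.nonneg
  simpa [fromBlocks_conjTranspose, fromBlocks_multiply, star_eq_conjTranspose] using
    posSemidef_conjTranspose_mul_self (fromBlocks X 0 0 Y)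

theorem sqrt_fromBlocks_zero [Fintype m] [Fintype n] [DecidableEq m] [DecidableEq n]
    {A : Matrix n n 𝕜} {B : Matrix m m 𝕜} (hA : A.PosSemidef) (hB : B.PosSemidef) :
    CFC.sqrt (fromBlocks A 0 0 B) = fromBlocks (CFC.sqrt A) 0 0 (CFC.sqrt B) :=
  CFC.sqrt_unique (by simp [fromBlocks_multiply, CFC.sqrt_mul_sqrt_self A hA.nonneg,
      CFC.sqrt_mul_sqrt_self B hB.nonneg])
    (PosSemidef.fromBlocks_zero (CFC.sqrt_nonneg A).posSemidef
      (CFC.sqrt_nonneg B).posSemidef).nonneg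

def hermitianDilation (X : Matrix m n 𝕜) : Matrix (n ⊕ m) (n ⊕ m) 𝕜 := fromBlocks 0 Xᴴ X 0

theorem isHermitian_hermitianDilation (X : Matrix m n 𝕜) :
    (hermitianDilation X).IsHermitian := by
  simp [hermitianDilation, IsHermitian, fromBlocks_conjTranspose]

theorem hermitianDilation_sub (X Y : Matrix m n 𝕜) :
    hermitianDilation X - hermitianDilation Y = hermitianDilation (X - Y) := by
  simp [hermitianDilation, fromBlocks_sub]

theorem frobenius_norm_hermitianDilation [Fintype m] [Fintype n] (X : Matrix m n 𝕜) :
    ‖hermitianDilation X‖ = √2 * ‖X‖ := by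
  have h : ‖hermitianDilation X‖ ^ 2 = 2 * ‖X‖ ^ 2 := by
    rw [hermitianDilation, frobenius_norm_fromBlocks_sq, frobenius_norm_conjTranspose]
    simp only [norm_zero]
    ring
  rw [← Real.sqrt_sq (norm_nonneg _), h, Real.sqrt_mul zero_le_two, Real.sqrt_sq (norm_nonneg _)]

theorem cfcAbs_hermitianDilation [Fintype m] [Fintype n] [DecidableEq m] [DecidableEq n]
    (X : Matrix m n 𝕜) :
    CFC.abs (hermitianDilation X) = fromBlocks (CFC.sqrt (Xᴴ * X)) 0 0 (CFC.sqrt (X * Xᴴ)) := by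
  rw [CFC.abs, ← sqrt_fromBlocks_zero (posSemidef_conjTranspose_mul_self X)
    (posSemidef_self_mul_conjTranspose X)]
  simp [hermitianDilation, fromBlocks_conjTranspose, fromBlocks_multiply, star_eq_conjTranspose]

end Matrix

theorem posSemidefSqrt_eq_sqrt {n : Type*} [Fintype n] [DecidableEq n] {A : Matrix n n ℝ}
    (hA : A.PosSemidef) : posSemidefSqrt hA = CFC.sqrt A := by
  rw [CFC.sqrt_eq_real_sqrt A hA.nonneg, cfcₙ_eq_cfc, hA.1.cfc_eq]
  rfl

theorem frobNorm_eq_norm {p M : ℕ} (A : Matrix (Fin p) (Fin M) ℝ) : frobNorm A = ‖A‖ := by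
  rw [frobNorm, ← Real.sqrt_sq (norm_nonneg A), frobenius_norm_sq]
  simp

theorem stmt9 {p M : ℕ} (W Wt : Matrix (Fin p) (Fin M) ℝ) :
    frobNorm (posSemidefSqrt (Matrix.posSemidef_conjTranspose_mul_self Wt)
        - posSemidefSqrt (Matrix.posSemidef_conjTranspose_mul_self W))
      ≤ Real.sqrt 2 * frobNorm (W - Wt) := by
  simp only [frobNorm_eq_norm, posSemidefSqrt_eq_sqrt]
  calc ‖CFC.sqrt (Wtᴴ * Wt) - CFC.sqrt (Wᴴ * W)‖
      ≤ ‖CFC.abs (hermitianDilation Wt) - CFC.abs (hermitianDilation W)‖ := by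
        rw [cfcAbs_hermitianDilation, cfcAbs_hermitianDilation, fromBlocks_sub]
        exact frobenius_norm_le_norm_fromBlocks _ _ _ _
    _ ≤ ‖hermitianDilation Wt - hermitianDilation W‖ :=
        (isHermitian_hermitianDilation Wt).frobenius_norm_cfcAbs_sub_le
          (isHermitian_hermitianDilation W)
    _ = √2 * ‖W - Wt‖ := by
        rw [hermitianDilation_sub, frobenius_norm_hermitianDilation, norm_sub_rev]
end
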